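/- arXiv:1703.03155 — 5 statements merged into one kernel-verified Lean document; each statement's English description precedes it below -/
import Mathlib

section
/- Every feasible solution of the SDP relaxation projects to a feasible solution of the continuous (SOCP) relaxation with equal objective value; consequently OPT_SDP ≤ OPT_SOCP. Specifically, if y ∈ ℝ^{|V|} and Y ∈ S^{|V|} are feasible for the SDP relaxation (with constraints eᵀy = N̄, A_{VV}·Y + 2c̄ᵀy ≤ 2θ̄, Y_ii = 1, (e eᵀ)·Y = N̄², and [[1,yᵀ],[y,Y]] ⪰ 0), then x_V := (y + e)/(2N) satisfies eᵀx_V + eᵀc_F = 1, 0 ≤ (x_V)_i ≤ 1/N for all i, and x := (x_V, c_F) satisfies xᵀAx ≤ 2θ. -/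
/-!
The Schur complement of the corner `1` turns `[[1, yᵀ], [y, Y]] ⪰ 0` into `Y - y yᵀ ⪰ 0`.
Its diagonal gives `y_i² ≤ Y_ii = 1`, hence the box constraints on `x_V`; pairing it with
`A_VV ⪰ 0` gives `yᵀ A_VV y ≤ A_VV • Y`. Expanding `xᵀ A x` for `x_V = (y + e)/(2N)` and
replacing `yᵀ A_VV y` by `A_VV • Y` turns the claim `xᵀ A x ≤ 2θ` into the SDP objective
constraint, while the sum constraint is linear.
-/

open Matrix Finset

namespace Matrix

variable {m n R : Type*} [Fintype m] [Fintype n]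

theorem IsSymm.dotProduct_mulVec_comm [CommSemiring R] {P : Matrix n n R} (hP : P.IsSymm)
    (u w : n → R) : w ⬝ᵥ P *ᵥ u = u ⬝ᵥ P *ᵥ w := by
  conv_lhs => rw [← hP.eq]
  exact dotProduct_transpose_mulVec P w u

omit [Fintype m] [Fintype n] in
theorem IsSymm.transpose_toBlocks₁₂ {A : Matrix (m ⊕ n) (m ⊕ n) R} (hA : A.IsSymm) :
    A.toBlocks₁₂ᵀ = A.toBlocks₂₁ := by
  ext i j
  exact hA.apply _ _

theorem IsSymm.sumElim_dotProduct_mulVec_sumElim [CommSemiring R]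
    {A : Matrix (m ⊕ n) (m ⊕ n) R} (hA : A.IsSymm) (u : m → R) (w : n → R) :
    Sum.elim u w ⬝ᵥ A *ᵥ Sum.elim u w =
      u ⬝ᵥ A.toBlocks₁₁ *ᵥ u + 2 * (u ⬝ᵥ A.toBlocks₁₂ *ᵥ w) + w ⬝ᵥ A.toBlocks₂₂ *ᵥ w := by
  rw [← A.fromBlocks_toBlocks, fromBlocks_mulVec, sumElim_dotProduct_sumElim]
  simp only [toBlocks_fromBlocks₁₁, toBlocks_fromBlocks₁₂, toBlocks_fromBlocks₂₂,
    Sum.elim_comp_inl, Sum.elim_comp_inr, dotProduct_add, ← hA.transpose_toBlocks₁₂,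
    dotProduct_transpose_mulVec]
  ring

-- The sum is `eᵀ (P ⊙ M) e`, and `P ⊙ M ⪰ 0` by the Schur product theorem.
theorem PosSemidef.sum_sum_mul_nonneg {P M : Matrix n n ℝ}
    (hP : P.PosSemidef) (hM : M.PosSemidef) : 0 ≤ ∑ i, ∑ j, P i j * M i j := by
  simpa [dotProduct, mulVec, Finset.mul_sum] using
    (hP.hadamard hM).dotProduct_mulVec_nonneg (fun _ => 1)

theorem PosSemidef.sub_vecMulVec_of_fromBlocks_one {y : n → ℝ} {Y : Matrix n n ℝ}
    (h : (fromBlocks (1 : Matrix Unit Unit ℝ) (replicateRow Unit y)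
      (replicateCol Unit y) Y).PosSemidef) :
    (Y - vecMulVec y y).PosSemidef := by
  have hB : (replicateRow Unit y)ᴴ = replicateCol Unit y := by simp
  let : Invertible (1 : Matrix Unit Unit ℝ) := invertibleOne
  rw [← hB, PosDef.fromBlocks₁₁ _ _ PosDef.one] at h
  simpa [vecMulVec_eq Unit] using h

omit [Fintype n] in
theorem PosSemidef.sq_le_of_sub_vecMulVec {y : n → ℝ} {Y : Matrix n n ℝ}
    (hY : (Y - vecMulVec y y).PosSemidef) (i : n) : y i ^ 2 ≤ Y i i := by
  have h := hY.diag_nonneg (i := i)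
  rw [sub_apply, vecMulVec_apply] at h
  linarith [sq (y i)]

theorem PosSemidef.dotProduct_mulVec_le_sum_sum_mul {P Y : Matrix n n ℝ}
    (hP : P.PosSemidef) {y : n → ℝ} (hY : (Y - vecMulVec y y).PosSemidef) :
    y ⬝ᵥ P *ᵥ y ≤ ∑ i, ∑ j, P i j * Y i j := by
  have h := hP.sum_sum_mul_nonneg hY
  simp only [sub_apply, vecMulVec_apply, mul_sub, Finset.sum_sub_distrib] at h
  have hy : y ⬝ᵥ P *ᵥ y = ∑ i, ∑ j, P i j * (y i * y j) := by
    simp only [dotProduct, mulVec, Finset.mul_sum]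
    exact Finset.sum_congr rfl fun i _ => Finset.sum_congr rfl fun j _ => by ring
  linarith

end Matrix

theorem sdp_feasible_to_socp_feasible_general (v f N : ℕ) (hN : 0 < N)
    (A : Matrix (Fin v ⊕ Fin f) (Fin v ⊕ Fin f) ℝ)
    (hApd : A.PosDef) (θ : ℝ)
    (cF : Fin f → ℝ)
    (p : ℝ) (hp : p = N * ∑ i, cF i)
    (Nbar : ℝ) (hNbar : Nbar = 2 * ((N : ℝ) - p) - v)
    (cbar : Fin v → ℝ)
    (hcbar : cbar = (A.toBlocks₁₁ *ᵥ (fun _ => 1)) + (2 * N) • (A.toBlocks₁₂ *ᵥ cF))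
    (θbar : ℝ)
    (hθbar : θbar = 2 * (N : ℝ)^2 * (2 * θ - cF ⬝ᵥ A.toBlocks₂₂ *ᵥ cF)
      - (1/2) * ((fun _ => (1:ℝ)) ⬝ᵥ A.toBlocks₁₁ *ᵥ (fun _ => 1))
      - 2 * N * (cF ⬝ᵥ A.toBlocks₂₁ *ᵥ (fun _ => 1)))
    (y : Fin v → ℝ) (Y : Matrix (Fin v) (Fin v) ℝ)
    (hsum : ∑ i, y i = Nbar)
    (hquad : (∑ i, ∑ j, A.toBlocks₁₁ i j * Y i j) + 2 * (cbar ⬝ᵥ y) ≤ 2 * θbar)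
    (hdiag : ∀ i, Y i i = 1)
    (hpsd : (Matrix.fromBlocks (1 : Matrix Unit Unit ℝ) (Matrix.replicateRow Unit y)
      (Matrix.replicateCol Unit y) Y).PosSemidef)
    (xV : Fin v → ℝ) (hxV : xV = fun i => (y i + 1) / (2 * N))
    (x : Fin v ⊕ Fin f → ℝ) (hx : x = Sum.elim xV cF) :
    (∑ i, xV i) + (∑ i, cF i) = 1 ∧
    (∀ i, 0 ≤ xV i ∧ xV i ≤ 1 / N) ∧
    x ⬝ᵥ A *ᵥ x ≤ 2 * θ := by
  have hN' : (0 : ℝ) < N := by exact_mod_cast hN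
  have hA : A.IsSymm := isHermitian_iff_isSymm.mp hApd.isHermitian
  have hA₁₁ : A.toBlocks₁₁.PosSemidef := hApd.posSemidef.submatrix Sum.inl
  have hSchur := PosSemidef.sub_vecMulVec_of_fromBlocks_one hpsd
  refine ⟨?_, fun i => ?_, ?_⟩
  · have hcF : ∑ i, cF i = p / N := by rw [hp]; field_simp
    simp only [hxV, ← Finset.sum_div, Finset.sum_add_distrib, hsum, hcF, hNbar, sum_const,
      card_univ, Fintype.card_fin, nsmul_eq_mul, mul_one]
    field_simp
    ring
  · obtain ⟨hy_ge, hy_le⟩ := abs_le.mp <|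
      (sq_le_one_iff_abs_le_one _).mp (hdiag i ▸ hSchur.sq_le_of_sub_vecMulVec i)
    rw [hxV, div_le_div_iff₀ (by positivity) hN']
    exact ⟨div_nonneg (by linarith) (by positivity), by nlinarith⟩
  · have hyY := hA₁₁.dotProduct_mulVec_le_sum_sum_mul hSchur
    have hsymm :=
      (isHermitian_iff_isSymm.mp hA₁₁.isHermitian).dotProduct_mulVec_comm y (fun _ => 1)
    rw [← hA.transpose_toBlocks₁₂, dotProduct_transpose_mulVec] at hθbar
    rw [hcbar, add_dotProduct, smul_dotProduct, nsmul_eq_mul, dotProduct_comm _ y,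
      dotProduct_comm _ y] at hquad
    push_cast at hquad
    have hxV' : xV = (2 * N : ℝ)⁻¹ • (y + fun _ => 1) := by
      ext i
      simp only [hxV, Pi.smul_apply, Pi.add_apply, smul_eq_mul]
      ring
    rw [hx, hA.sumElim_dotProduct_mulVec_sumElim, hxV']
    simp only [mulVec_add, mulVec_smul, dotProduct_add, add_dotProduct, dotProduct_smul,
      smul_dotProduct, smul_eq_mul]
    field_simp
    linarith

/-- Every feasible solution `(y, Y)` of the SDP relaxation projects, via
`x_V := (y + e)/(2N)`, to a feasible solution of the continuous (SOCP)
relaxation with equal objective value; consequently `OPT_SDP ≤ OPT_SOCP`. -/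
theorem sdp_feasible_to_socp_feasible (v f N : ℕ) (hN : 0 < N)
    (A : Matrix (Fin v ⊕ Fin f) (Fin v ⊕ Fin f) ℝ) (hAsym : A.IsSymm)
    (hApd : A.PosDef) (θ : ℝ) (hθ : 0 < θ)
    (cF : Fin f → ℝ) (hcF : ∀ i, cF i = 0 ∨ cF i = 1 / N)
    (p : ℝ) (hp : p = N * ∑ i, cF i)
    (Nbar : ℝ) (hNbar : Nbar = 2 * ((N : ℝ) - p) - v)
    (cbar : Fin v → ℝ)
    (hcbar : cbar = (A.toBlocks₁₁ *ᵥ (fun _ => 1)) + (2 * N) • (A.toBlocks₁₂ *ᵥ cF))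
    (θbar : ℝ)
    (hθbar : θbar = 2 * (N : ℝ)^2 * (2 * θ - cF ⬝ᵥ A.toBlocks₂₂ *ᵥ cF)
      - (1/2) * ((fun _ => (1:ℝ)) ⬝ᵥ A.toBlocks₁₁ *ᵥ (fun _ => 1))
      - 2 * N * (cF ⬝ᵥ A.toBlocks₂₁ *ᵥ (fun _ => 1)))
    (y : Fin v → ℝ) (Y : Matrix (Fin v) (Fin v) ℝ)
    (hsum : ∑ i, y i = Nbar)
    (hquad : (∑ i, ∑ j, A.toBlocks₁₁ i j * Y i j) + 2 * (cbar ⬝ᵥ y) ≤ 2 * θbar)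
    (hdiag : ∀ i, Y i i = 1)
    (hYsum : ∑ i, ∑ j, Y i j = Nbar ^ 2)
    (hpsd : (Matrix.fromBlocks (1 : Matrix Unit Unit ℝ) (Matrix.replicateRow Unit y)
      (Matrix.replicateCol Unit y) Y).PosSemidef)
    (xV : Fin v → ℝ) (hxV : xV = fun i => (y i + 1) / (2 * N))
    (x : Fin v ⊕ Fin f → ℝ) (hx : x = Sum.elim xV cF) :
    (∑ i, xV i) + (∑ i, cF i) = 1 ∧
    (∀ i, 0 ≤ xV i ∧ xV i ≤ 1 / N) ∧
    x ⬝ᵥ A *ᵥ x ≤ 2 * θ :=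
  sdp_feasible_to_socp_feasible_general v f N hN A hApd θ cF p hp Nbar hNbar cbar hcbar θbar hθbar y
    Y hsum hquad hdiag hpsd xV hxV x hx
end

section
/- Consider the ED problem with a penalty formulation: f_λ(x) := gᵀx − λ·max{xᵀAx − 2θ, 0} maximized over the finite set F̂ := {x ∈ ℝ^Z : eᵀx = 1, l ≤ x ≤ u, x_i ∈ {0, 1/N}}. Assume F̂ contains at least one point x with xᵀAx ≤ 2θ. Then there exists λ̂ > 0 such that for every λ ≥ λ̂, every maximizer x(λ) of f_λ over F̂ satisfies x(λ)ᵀA x(λ) ≤ 2θ and x(λ) is an optimal solution of the original ED problem (maximize gᵀx over F̂ subject to xᵀAx ≤ 2θ). -/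
open Matrix Filter

/-!
Points of a finite set that violate the constraint do so by a margin bounded away from zero,
while the objective varies only by a bounded amount, so once the penalty parameter is large
enough every violating point is beaten by a feasible one.
-/

theorem eventually_sub_mul_lt {a b c : ℝ} (hc : 0 < c) : ∀ᶠ t in atTop, a - t * c < b := by
  filter_upwards [eventually_gt_atTop ((a - b) / c)] with t ht
  rw [div_lt_iff₀ hc] at ht
  linarith

theorem Set.Finite.exists_exact_penalty {α : Type*} {S : Set α} (hS : S.Finite) (g p : α → ℝ)
    (hp : ∀ x, 0 ≤ p x) (hfeas : ∃ x ∈ S, p x = 0) :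
    ∃ lamHat : ℝ, 0 < lamHat ∧ ∀ lam : ℝ, lamHat ≤ lam →
      ∀ y ∈ S, (∀ x ∈ S, g x - lam * p x ≤ g y - lam * p y) →
        p y = 0 ∧ ∀ x ∈ S, p x = 0 → g x ≤ g y := by
  obtain ⟨x₀, hx₀S, hx₀⟩ := hfeas
  have hbeaten : ∀ᶠ lam in atTop, ∀ y ∈ S, 0 < p y → g y - lam * p y < g x₀ :=
    (eventually_all_finite hS).2 fun y _ => by
      by_cases hy : 0 < p y
      · filter_upwards [eventually_sub_mul_lt hy] with lam h _ using h
      · exact Eventually.of_forall fun _ h => absurd h hy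
  obtain ⟨lam₀, hlam₀⟩ := eventually_atTop.1 hbeaten
  refine ⟨max lam₀ 1, one_pos.trans_le (le_max_right _ _), fun lam hlam y hyS hmax => ?_⟩
  have hy : p y = 0 := by
    by_contra hne
    have hle := hmax x₀ hx₀S
    rw [hx₀, mul_zero, sub_zero] at hle
    exact (hlam₀ lam ((le_max_left _ _).trans hlam) y hyS ((hp y).lt_of_ne' hne)).not_ge hle
  refine ⟨hy, fun x hxS hx => ?_⟩
  simpa [hx, hy] using hmax x hxS

theorem finite_setOf_forall_eq_zero_or_eq {ι β : Type*} [Finite ι] [Zero β] (c : β) :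
    {x : ι → β | ∀ i, x i = 0 ∨ x i = c}.Finite :=
  (Set.Finite.pi' fun _ => (Set.finite_singleton c).insert 0).subset fun _ hx i => hx i

theorem penalty_exactness_general (Z N : ℕ)
    (A : Matrix (Fin Z) (Fin Z) ℝ)
    (g : Fin Z → ℝ) (θ : ℝ) (l u : Fin Z → ℝ)
    (Fhat : Set (Fin Z → ℝ))
    (hFhat : Fhat = {x : Fin Z → ℝ | (∑ i, x i) = 1 ∧ (∀ i, l i ≤ x i ∧ x i ≤ u i) ∧
      ∀ i, x i = 0 ∨ x i = 1 / N})
    (f : ℝ → (Fin Z → ℝ) → ℝ)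
    (hf : f = fun lam x => g ⬝ᵥ x - lam * max (x ⬝ᵥ A *ᵥ x - 2 * θ) 0)
    (hfeas : ∃ x ∈ Fhat, x ⬝ᵥ A *ᵥ x ≤ 2 * θ) :
    ∃ lamHat : ℝ, 0 < lamHat ∧ ∀ lam : ℝ, lamHat ≤ lam →
      ∀ xlam ∈ Fhat, (∀ x ∈ Fhat, f lam x ≤ f lam xlam) →
        xlam ⬝ᵥ A *ᵥ xlam ≤ 2 * θ ∧
        ∀ x ∈ Fhat, x ⬝ᵥ A *ᵥ x ≤ 2 * θ → g ⬝ᵥ x ≤ g ⬝ᵥ xlam := by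
  subst hf
  have hfin : Fhat.Finite := hFhat ▸
    (finite_setOf_forall_eq_zero_or_eq (1 / N : ℝ)).subset fun _ hx => hx.2.2
  have hpen_eq_zero (x : Fin Z → ℝ) : max (x ⬝ᵥ A *ᵥ x - 2 * θ) 0 = 0 ↔ x ⬝ᵥ A *ᵥ x ≤ 2 * θ := by
    rw [max_eq_right_iff, sub_nonpos]
  obtain ⟨lamHat, hpos, hexact⟩ := hfin.exists_exact_penalty (g ⬝ᵥ ·)
    (fun x => max (x ⬝ᵥ A *ᵥ x - 2 * θ) 0) (fun _ => le_max_right _ _)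
    (by simpa only [hpen_eq_zero] using hfeas)
  refine ⟨lamHat, hpos, fun lam hlam xlam hxlam hmax => ?_⟩
  obtain ⟨hfeasible, hoptimal⟩ := hexact lam hlam xlam hxlam hmax
  exact ⟨(hpen_eq_zero xlam).1 hfeasible, fun x hx hxq => hoptimal x hx ((hpen_eq_zero x).2 hxq)⟩

/-- Exactness of the penalty formulation of the ED problem: there exists a
threshold `λ̂ > 0` such that for every `λ ≥ λ̂`, every maximizer of
`f_λ(x) = gᵀx − λ·max{xᵀAx − 2θ, 0}` over the finite feasible set `F̂`
satisfies the quadratic constraint and is optimal for the original ED problem. -/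
theorem penalty_exactness (Z N : ℕ) (hN : 0 < N)
    (A : Matrix (Fin Z) (Fin Z) ℝ) (hAsym : A.IsSymm) (hApsd : A.PosSemidef)
    (g : Fin Z → ℝ) (θ : ℝ) (hθ : 0 < θ) (l u : Fin Z → ℝ)
    (Fhat : Set (Fin Z → ℝ))
    (hFhat : Fhat = {x : Fin Z → ℝ | (∑ i, x i) = 1 ∧ (∀ i, l i ≤ x i ∧ x i ≤ u i) ∧
      ∀ i, x i = 0 ∨ x i = 1 / N})
    (f : ℝ → (Fin Z → ℝ) → ℝ)
    (hf : f = fun lam x => g ⬝ᵥ x - lam * max (x ⬝ᵥ A *ᵥ x - 2 * θ) 0)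
    (hfeas : ∃ x ∈ Fhat, x ⬝ᵥ A *ᵥ x ≤ 2 * θ) :
    ∃ lamHat : ℝ, 0 < lamHat ∧ ∀ lam : ℝ, lamHat ≤ lam →
      ∀ xlam ∈ Fhat, (∀ x ∈ Fhat, f lam x ≤ f lam xlam) →
        xlam ⬝ᵥ A *ᵥ xlam ≤ 2 * θ ∧
        ∀ x ∈ Fhat, x ⬝ᵥ A *ᵥ x ≤ 2 * θ → g ⬝ᵥ x ≤ g ⬝ᵥ xlam :=
  penalty_exactness_general Z N A g θ l u Fhat hFhat f hf hfeas
end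

section
/- For all y with −1 ≤ y ≤ 1 it holds that arccos(y)/π ≥ α·(1−y)/2, where α := min{ (2/π)·(t/(1−cos t)) : 0 < t ≤ π }. -/
open Real

theorem mul_one_sub_cos_div_two_le_div_pi {α t : ℝ} (hcos : cos t < 1)
    (h : α ≤ 2 / π * (t / (1 - cos t))) : α * (1 - cos t) / 2 ≤ t / π := by
  have hpos : 0 < 1 - cos t := sub_pos.2 hcos
  calc α * (1 - cos t) / 2 ≤ 2 / π * (t / (1 - cos t)) * (1 - cos t) / 2 := by gcongr
    _ = t / π := by field_simp

/-- Goemans–Williamson inequality: with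
`α = min{(2/π)·t/(1−cos t) : 0 < t ≤ π}`, for every `y ∈ [−1,1]` one has
`arccos(y)/π ≥ α·(1−y)/2`. -/
theorem arccos_ge_alpha (α : ℝ)
    (hα : IsLeast {a : ℝ | ∃ t : ℝ, 0 < t ∧ t ≤ π ∧
      a = (2 / π) * (t / (1 - Real.cos t))} α) :
    ∀ y : ℝ, -1 ≤ y → y ≤ 1 → Real.arccos y / π ≥ α * (1 - y) / 2 := by
  intro y hy₁ hy₂
  rcases hy₂.eq_or_lt with rfl | hy
  · simp
  have hcos : cos (arccos y) = y := cos_arccos hy₁ hy₂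
  have hle : α ≤ 2 / π * (arccos y / (1 - cos (arccos y))) :=
    hα.2 ⟨arccos y, arccos_pos.2 hy, arccos_le_pi y, rfl⟩
  have key := mul_one_sub_cos_div_two_le_div_pi (hcos.symm ▸ hy) hle
  rwa [hcos] at key
end

section
/- Let Y* be a feasible matrix of the SDP relaxation with Y*_00 = Y*_ii = 1 and Y* ⪰ 0, and let the rounded random variable ỹ_i take value +1 with probability 1 − arccos(Y*_0i)/π and −1 otherwise. Then E[ỹ_i] = 1 − (2/π)·arccos(Y*_0i), and moreover E[ỹ_i] ≤ α·(Y*_0i − 1) + 1 where α = min{(2/π)·t/(1−cos t) : 0 < t ≤ π}. -/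
open Real Matrix

/-!
Entrywise, a positive semidefinite matrix with unit diagonal has `|Y₀ᵢ| ≤ 1` (test the quadratic
form on `e₀ ± eᵢ`), so `y = Y₀ᵢ = cos θ` with `θ = arccos y ∈ [0, π]`. For `θ > 0` the minimality
of `α` gives `α ≤ (2/π) θ / (1 - cos θ)`, i.e. `α (1 - y) ≤ (2/π) arccos y`, which rearranges to
the claimed bound; for `θ = 0` both sides vanish.
-/

theorem Matrix.PosSemidef.two_mul_abs_apply_le {m : Type*} [Fintype m] [DecidableEq m]
    {A : Matrix m m ℝ} (hA : A.PosSemidef) (i j : m) : 2 * |A i j| ≤ A i i + A j j := by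
  have hsymm : A j i = A i j := by simpa using hA.isHermitian.apply i j
  have quadratic (c : ℝ) : 0 ≤ A i i + 2 * c * A i j + c ^ 2 * A j j := by
    have h := hA.dotProduct_mulVec_nonneg (Pi.single i 1 + Pi.single j c)
    simp only [star_trivial, mulVec_add, mulVec_single, MulOpposite.op_one, one_smul,
      op_smul_eq_smul, dotProduct_add, add_dotProduct, single_dotProduct, col_apply, one_mul,
      hsymm, dotProduct_smul, smul_eq_mul] at h
    linarith
  have hplus := quadratic 1
  have hminus := quadratic (-1)
  norm_num at hplus hminus
  cases abs_cases (A i j) <;> linarith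

def goemansWilliamsonRatios : Set ℝ :=
  {a : ℝ | ∃ t : ℝ, 0 < t ∧ t ≤ π ∧ a = (2 / π) * (t / (1 - Real.cos t))}

theorem mul_one_sub_le_two_div_pi_mul_arccos {α y : ℝ}
    (hα : α ∈ lowerBounds goemansWilliamsonRatios) (hy₁ : -1 ≤ y) (hy₂ : y ≤ 1) :
    α * (1 - y) ≤ (2 / π) * arccos y := by
  rcases hy₂.eq_or_lt with rfl | hy
  · simp
  have hcos : cos (arccos y) = y := cos_arccos hy₁ hy₂
  have hpos : 0 < arccos y := arccos_pos.mpr hy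
  have hle := hα ⟨arccos y, hpos, arccos_le_pi y, rfl⟩
  rw [hcos] at hle
  have hden : 0 < 1 - y := by linarith
  calc α * (1 - y) ≤ (2 / π) * (arccos y / (1 - y)) * (1 - y) := by gcongr
    _ = (2 / π) * arccos y := by field_simp

/-- Expected value of the randomized rounding: if `Y*` is positive semidefinite
with unit diagonal (indices `0,…,n`) and `ỹ_i` takes value `+1` with probability
`1 − arccos(Y*_{0i})/π` and `−1` otherwise, then
`E[ỹ_i] = 1 − (2/π)·arccos(Y*_{0i}) ≤ α·(Y*_{0i} − 1) + 1`. -/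
theorem rounding_expectation (n : ℕ) (Y : Matrix (Fin (n + 1)) (Fin (n + 1)) ℝ)
    (hpsd : Y.PosSemidef) (hdiag : ∀ i, Y i i = 1)
    (α : ℝ)
    (hα : IsLeast {a : ℝ | ∃ t : ℝ, 0 < t ∧ t ≤ π ∧
      a = (2 / π) * (t / (1 - Real.cos t))} α) :
    ∀ i : Fin n,
      1 * (1 - Real.arccos (Y 0 i.succ) / π)
        + (-1) * (1 - (1 - Real.arccos (Y 0 i.succ) / π))
        = 1 - (2 / π) * Real.arccos (Y 0 i.succ) ∧
      1 - (2 / π) * Real.arccos (Y 0 i.succ) ≤ α * (Y 0 i.succ - 1) + 1 := by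
  intro i
  have hentry := hpsd.two_mul_abs_apply_le 0 i.succ
  rw [hdiag, hdiag] at hentry
  obtain ⟨hy₁, hy₂⟩ := abs_le.mp (show |Y 0 i.succ| ≤ 1 by linarith)
  have hratio := mul_one_sub_le_two_div_pi_mul_arccos hα.2 hy₁ hy₂
  exact ⟨by ring, by linarith⟩
end

section
/- Under Assumption A (the inequality S_{N̂}(Â_Ŵ) ≤ (2θ̄ − 2·trace(A_VV) + eᵀA_VV e − 2c̄ᵀŷ)/4), the optimal value of the LP: minimize A_VV·Y subject to (e eᵀ)·Y = N̄², Y_ii = 1 for all i ∈ V, and −1 ≤ Y_ij ≤ 1 for i<j, equals ρ_LP = 4·S_{N̂}(Â_Ŵ) − eᵀ A_VV e + 2·trace(A_VV), where N̂ = (N̄² + |V|² − 2|V|)/4. -/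
/-!
Substituting `X̄ᵢⱼ = (Yᵢⱼ + 1)/2` on the pairs `i < j` turns the LP into a fractional knapsack:
minimise `∑ Aᵢⱼ X̄ᵢⱼ` over `0 ≤ X̄ ≤ 1` with `∑ X̄ᵢⱼ = N̂`. Its optimum is attained at the
indicator `1_T` of a set `T` of `N̂` cheapest pairs: if `τ` separates the costs on `T` from those
off `T`, then `∑ Aᵢⱼ X̄ᵢⱼ - ∑_T Aᵢⱼ = ∑ (Aᵢⱼ - τ) (X̄ᵢⱼ - 1_T(i, j)) ≥ 0` termwise.
-/

open Matrix Finset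

section UpperPairs

variable {ι : Type*} [LinearOrder ι]

variable (ι) in
def upperPairs [Fintype ι] : Finset (ι × ι) := univ.filter fun p => p.1 < p.2

theorem sum_sum_eq_sum_diag_add_two_nsmul_sum_upperPairs [Fintype ι] {M : Type*}
    [AddCommMonoid M] (g : ι → ι → M) (hg : ∀ i j, g i j = g j i) :
    ∑ i, ∑ j, g i j = ∑ i, g i i + 2 • ∑ p ∈ upperPairs ι, g p.1 p.2 := by
  have hlower : ∑ p ∈ univ.filter (fun p : ι × ι => p.2 < p.1), g p.1 p.2
      = ∑ p ∈ upperPairs ι, g p.1 p.2 :=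
    sum_equiv (Equiv.prodComm ι ι) (by simp [upperPairs]) (fun p _ => hg _ _)
  have hnot : ∑ p ∈ univ.filter (fun p : ι × ι => ¬p.1 < p.2), g p.1 p.2
      = ∑ p ∈ univ.filter (fun p : ι × ι => p.2 < p.1), g p.1 p.2 + ∑ i, g i i := by
    rw [← sum_filter_add_sum_filter_not _ (fun p : ι × ι => p.2 < p.1), filter_filter,
      filter_filter, ← sum_diag univ fun p => g p.1 p.2]
    congr 2 <;> ext p <;> simp only [mem_filter, mem_univ, true_and, mem_diag]
    · exact ⟨And.right, fun h => ⟨h.not_gt, h⟩⟩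
    · exact ⟨fun h => le_antisymm (not_lt.1 h.2) (not_lt.1 h.1), fun h => by simp [h]⟩
  rw [← Fintype.sum_prod_type',
    ← sum_filter_add_sum_filter_not univ (fun p : ι × ι => p.1 < p.2), hnot, hlower, two_nsmul]
  simp only [upperPairs]
  abel

theorem sum_sum_mul_eq_of_diag_eq_one [Fintype ι] {A Y : Matrix ι ι ℝ} (hA : A.IsSymm)
    (hY : Y.IsSymm) (hdiag : ∀ i, Y i i = 1) :
    ∑ i, ∑ j, A i j * Y i j = 4 * ∑ p ∈ upperPairs ι, A p.1 p.2 * ((Y p.1 p.2 + 1) / 2)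
      - ∑ i, ∑ j, A i j + 2 * ∑ i, A i i := by
  have hsplitA := sum_sum_eq_sum_diag_add_two_nsmul_sum_upperPairs A fun i j => hA.apply j i
  have hsplitAY := sum_sum_eq_sum_diag_add_two_nsmul_sum_upperPairs (fun i j => A i j * Y i j)
    fun i j => by rw [hA.apply j i, hY.apply j i]
  have hhalf : 2 * ∑ p ∈ upperPairs ι, A p.1 p.2 * ((Y p.1 p.2 + 1) / 2)
      = ∑ p ∈ upperPairs ι, A p.1 p.2 * Y p.1 p.2 + ∑ p ∈ upperPairs ι, A p.1 p.2 := by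
    rw [mul_sum, ← sum_add_distrib]
    exact sum_congr rfl fun p _ => by ring
  simp only [hdiag, mul_one, nsmul_eq_mul, Nat.cast_ofNat] at hsplitA hsplitAY
  linarith

theorem sum_sum_eq_of_diag_eq_one [Fintype ι] {Y : Matrix ι ι ℝ} (hY : Y.IsSymm)
    (hdiag : ∀ i, Y i i = 1) :
    ∑ i, ∑ j, Y i j = 4 * ∑ p ∈ upperPairs ι, (Y p.1 p.2 + 1) / 2
      - (Fintype.card ι : ℝ) ^ 2 + 2 * Fintype.card ι := by
  have h := sum_sum_mul_eq_of_diag_eq_one (A := of fun _ _ => (1 : ℝ))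
    (IsSymm.ext fun _ _ => rfl) hY hdiag
  simp only [of_apply, one_mul, sum_const, card_univ, nsmul_eq_mul, mul_one] at h
  rw [h]; ring

def pairSignMatrix (T : Finset (ι × ι)) : Matrix ι ι ℝ :=
  of fun i j => if i = j ∨ (i, j) ∈ T ∨ (j, i) ∈ T then 1 else -1

variable {T : Finset (ι × ι)}

theorem pairSignMatrix_isSymm : (pairSignMatrix T).IsSymm :=
  IsSymm.ext fun i j => by
    simp only [pairSignMatrix, of_apply, eq_comm, or_comm (a := (i, j) ∈ T)]

theorem pairSignMatrix_diag (i : ι) : pairSignMatrix T i i = 1 := by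
  simp [pairSignMatrix]

theorem pairSignMatrix_mem_Icc (i j : ι) : pairSignMatrix T i j ∈ Set.Icc (-1) 1 := by
  simp only [pairSignMatrix, of_apply]; split_ifs <;> norm_num

theorem sum_upperPairs_mul_pairSignMatrix [Fintype ι] (hT : T ⊆ upperPairs ι) (f : ι × ι → ℝ) :
    ∑ p ∈ upperPairs ι, f p * ((pairSignMatrix T p.1 p.2 + 1) / 2) = ∑ p ∈ T, f p := by
  have hentry : ∀ p ∈ upperPairs ι,
      (pairSignMatrix T p.1 p.2 + 1) / 2 = if p ∈ T then 1 else 0 := by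
    intro p hp
    have hlt : p.1 < p.2 := (mem_filter.1 hp).2
    have hswap : (p.2, p.1) ∉ T := fun h => hlt.not_gt (mem_filter.1 (hT h)).2
    by_cases hpT : p ∈ T <;> simp [pairSignMatrix, hlt.ne, hswap, hpT]
  rw [sum_congr rfl fun p hp => by rw [hentry p hp, mul_ite, mul_one, mul_zero],
    sum_ite_mem, inter_eq_right.2 hT]

end UpperPairs

theorem exists_card_eq_and_threshold {α β : Type*} [DecidableEq α] [LinearOrder β]
    [Nonempty β] (W : Finset α) (a : α → β) {n : ℕ} (hn : n ≤ #W) :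
    ∃ T ⊆ W, #T = n ∧ ∃ τ, (∀ p ∈ T, a p ≤ τ) ∧ ∀ q ∈ W \ T, τ ≤ a q := by
  induction n with
  | zero =>
    obtain ⟨τ, hτ⟩ := (W.image a).bddBelow
    exact ⟨∅, empty_subset _, rfl, τ, by simp, fun q hq =>
      hτ (mem_image_of_mem a (mem_sdiff.1 hq).1)⟩
  | succ n ih =>
    obtain ⟨T, hTW, hTc, τ, hτT, hτW⟩ := ih (Nat.le_of_succ_le hn)
    have hne : (W \ T).Nonempty := by
      rw [← card_pos, card_sdiff_of_subset hTW]; omega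
    obtain ⟨q, hq, hqmin⟩ := (W \ T).exists_min_image a hne
    refine ⟨insert q T, insert_subset (mem_sdiff.1 hq).1 hTW, ?_, a q, ?_, ?_⟩
    · rw [card_insert_of_notMem (mem_sdiff.1 hq).2, hTc]
    · simpa using fun p hp => (hτT p hp).trans (hτW q hq)
    · intro r hr
      exact hqmin r (by simp only [mem_sdiff, mem_insert, not_or] at hr ⊢; exact ⟨hr.1, hr.2.2⟩)

theorem exists_card_eq_sum_le_sum_mul {α : Type*} [DecidableEq α] (W : Finset α) (a x : α → ℝ)
    (n : ℕ) (hx : ∀ p ∈ W, x p ∈ Set.Icc 0 1) (hsum : ∑ p ∈ W, x p = n) :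
    ∃ T ⊆ W, #T = n ∧ ∑ p ∈ T, a p ≤ ∑ p ∈ W, a p * x p := by
  have hn : n ≤ #W := by
    have : ∑ p ∈ W, x p ≤ ∑ p ∈ W, 1 := sum_le_sum fun p hp => (hx p hp).2
    exact_mod_cast (by simpa [hsum] using this : (n : ℝ) ≤ #W)
  obtain ⟨T, hTW, hTc, τ, hτT, hτW⟩ := exists_card_eq_and_threshold W a hn
  refine ⟨T, hTW, hTc, ?_⟩
  have hpoint : ∀ p ∈ W, τ * (x p - if p ∈ T then 1 else 0)
      ≤ a p * x p - if p ∈ T then a p else 0 := by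
    intro p hp
    obtain ⟨hx0, hx1⟩ := hx p hp
    by_cases hpT : p ∈ T
    · simp only [hpT, if_true]; nlinarith [hτT p hpT]
    · simp only [hpT, if_false]; nlinarith [hτW p (mem_sdiff.2 ⟨hp, hpT⟩)]
  have hsum_le := sum_le_sum hpoint
  rw [← mul_sum, sum_sub_distrib, sum_sub_distrib, sum_ite_mem, sum_ite_mem,
    inter_eq_right.2 hTW, hsum, sum_const, hTc, nsmul_one, sub_self, mul_zero] at hsum_le
  linarith

theorem lp_feas_optimal_value_general (v : ℕ) (A : Matrix (Fin v) (Fin v) ℝ)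
    (hAsym : A.IsSymm)
    (What : Finset (Fin v × Fin v))
    (hWhat : What = Finset.univ.filter (fun p : Fin v × Fin v => p.1 < p.2))
    (Nhat : ℕ) (Nbar : ℝ)
    (hNhat : (Nhat : ℝ) = (Nbar ^ 2 + (v : ℝ) ^ 2 - 2 * v) / 4)
    (S : ℝ)
    (hS : IsLeast {t : ℝ | ∃ T ⊆ What, T.card = Nhat ∧
      t = ∑ p ∈ T, A p.1 p.2} S) :
    IsLeast {t : ℝ | ∃ Y : Matrix (Fin v) (Fin v) ℝ, Y.IsSymm ∧
        (∑ i, ∑ j, Y i j) = Nbar ^ 2 ∧ (∀ i, Y i i = 1) ∧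
        (∀ i j : Fin v, i < j → -1 ≤ Y i j ∧ Y i j ≤ 1) ∧
        t = ∑ i, ∑ j, A i j * Y i j}
      (4 * S - (∑ i, ∑ j, A i j) + 2 * (∑ i, A i i)) := by
  change What = upperPairs (Fin v) at hWhat
  subst hWhat
  constructor
  · obtain ⟨T, hTW, hTc, rfl⟩ := hS.1
    refine ⟨pairSignMatrix T, pairSignMatrix_isSymm, ?_, pairSignMatrix_diag,
      fun i j _ => pairSignMatrix_mem_Icc i j, ?_⟩
    · have hcard := sum_upperPairs_mul_pairSignMatrix hTW 1
      simp only [Pi.one_apply, one_mul, sum_const, hTc, nsmul_one] at hcard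
      rw [sum_sum_eq_of_diag_eq_one pairSignMatrix_isSymm pairSignMatrix_diag, hcard, hNhat,
        Fintype.card_fin]
      ring
    · rw [sum_sum_mul_eq_of_diag_eq_one hAsym pairSignMatrix_isSymm pairSignMatrix_diag,
        sum_upperPairs_mul_pairSignMatrix hTW]
  · rintro _ ⟨Y, hYsymm, hYsum, hYdiag, hYbound, rfl⟩
    have hXsum : ∑ p ∈ upperPairs (Fin v), (Y p.1 p.2 + 1) / 2 = Nhat := by
      rw [sum_sum_eq_of_diag_eq_one hYsymm hYdiag, Fintype.card_fin] at hYsum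
      rw [hNhat]; linarith
    have hXbound : ∀ p ∈ upperPairs (Fin v), (Y p.1 p.2 + 1) / 2 ∈ Set.Icc 0 1 := fun p hp => by
      obtain ⟨hlo, hhi⟩ := hYbound p.1 p.2 (mem_filter.1 hp).2
      constructor <;> linarith
    obtain ⟨T, hTW, hTc, hle⟩ :=
      exists_card_eq_sum_le_sum_mul _ (fun p => A p.1 p.2) _ Nhat hXbound hXsum
    have hST : S ≤ ∑ p ∈ T, A p.1 p.2 := hS.2 ⟨T, hTW, hTc, rfl⟩
    rw [sum_sum_mul_eq_of_diag_eq_one hAsym hYsymm hYdiag]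
    linarith

/-- Under Assumption A, the LP
`min A_VV·Y s.t. (e eᵀ)·Y = N̄², Y_ii = 1, −1 ≤ Y_ij ≤ 1 (i<j)` has optimal
value `ρ_LP = 4·S_{N̂}(Â_Ŵ) − eᵀA_VV e + 2·trace(A_VV)`, where `S_{N̂}(Â_Ŵ)` is
the sum of the `N̂` smallest strictly-upper-triangular entries of `A_VV`
(characterized as the least sum over subsets of `Ŵ` of cardinality `N̂`) and
`N̂ = (N̄² + |V|² − 2|V|)/4`. -/
theorem lp_feas_optimal_value (v : ℕ) (A : Matrix (Fin v) (Fin v) ℝ)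
    (hAsym : A.IsSymm)
    (What : Finset (Fin v × Fin v))
    (hWhat : What = Finset.univ.filter (fun p : Fin v × Fin v => p.1 < p.2))
    (Nhat : ℕ) (Nbar : ℝ)
    (hNhat : (Nhat : ℝ) = (Nbar ^ 2 + (v : ℝ) ^ 2 - 2 * v) / 4)
    (S : ℝ)
    (hS : IsLeast {t : ℝ | ∃ T ⊆ What, T.card = Nhat ∧
      t = ∑ p ∈ T, A p.1 p.2} S)
    (θbar : ℝ) (cbar yhat : Fin v → ℝ)
    (hAssumptionA : S ≤ (2 * θbar - 2 * (∑ i, A i i)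
      + (∑ i, ∑ j, A i j) - 2 * (cbar ⬝ᵥ yhat)) / 4) :
    IsLeast {t : ℝ | ∃ Y : Matrix (Fin v) (Fin v) ℝ, Y.IsSymm ∧
        (∑ i, ∑ j, Y i j) = Nbar ^ 2 ∧ (∀ i, Y i i = 1) ∧
        (∀ i j : Fin v, i < j → -1 ≤ Y i j ∧ Y i j ≤ 1) ∧
        t = ∑ i, ∑ j, A i j * Y i j}
      (4 * S - (∑ i, ∑ j, A i j) + 2 * (∑ i, A i i)) :=
  lp_feas_optimal_value_general v A hAsym What hWhat Nhat Nbar hNhat S hS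
end
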